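/- arXiv:1305.5355 — 3 statements merged into one kernel-verified Lean document; each statement's English description precedes it below -/
import Mathlib

section
/- Let b ∈ ℝⁿ, λ₁, λ₂ ≥ 0, c ∈ ℝ and f(x) = ½xᵀx + bᵀx + c + λ₁‖x‖₂ + λ₂‖x‖₁. Let S = {i : |bᵢ| < λ₂} and S̄ its complement. If x⁰ minimizes f, then the restriction x⁰| S̄ minimizes g(y) = ½yᵀy + (b_S̄ − λ₂ sgn(b_S̄))ᵀy + c + λ₁‖y‖₂ over y ∈ ℝ^{S̄}. -/
/-!
The reduced objective `g` minorizes `f`: coordinates with `|bᵢ| ≤ λ₂` contribute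
`½xᵢ² + bᵢxᵢ + λ₂|xᵢ| ≥ 0`, and on the others `-λ₂ sgn(bᵢ) xᵢ ≤ λ₂|xᵢ|`.
Conversely, given `y`, the vector `z` supported on `S̄` with `|zᵢ| = |yᵢ|` and `bᵢzᵢ = -|bᵢyᵢ|`
satisfies `f z ≤ g y`, because `|bᵢ - λ₂ sgn bᵢ| = |bᵢ| - λ₂` when `λ₂ ≤ |bᵢ|`.
Hence `g x⁰ ≤ f x⁰ ≤ f z ≤ g y`.
-/

open Finset

namespace SparseGroupLasso

lemma mul_add_mul_abs_nonneg {b l : ℝ} (h : |b| ≤ l) (t : ℝ) : 0 ≤ b * t + l * |t| := by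
  have : |b * t| ≤ l * |t| := by rw [abs_mul]; gcongr
  linarith [neg_abs_le (b * t)]

lemma sub_mul_sign_mul_le {l : ℝ} (hl : 0 ≤ l) (b t : ℝ) :
    (b - l * Real.sign b) * t ≤ b * t + l * |t| := by
  rcases Real.sign_apply_eq b with h | h | h <;> rw [h]
  · nlinarith [le_abs_self t]
  · nlinarith [abs_nonneg t]
  · nlinarith [neg_abs_le t]

lemma abs_sub_mul_sign {b l : ℝ} (hl : 0 ≤ l) (h : l ≤ |b|) :
    |b - l * Real.sign b| = |b| - l := by
  rcases lt_trichotomy b 0 with hb | rfl | hb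
  · rw [Real.sign_of_neg hb, abs_of_neg hb] at *
    rw [abs_of_nonpos (by linarith)]; ring
  · rw [abs_zero] at *
    rw [show l = 0 by linarith]; simp
  · rw [Real.sign_of_pos hb, abs_of_pos hb] at *
    rw [abs_of_nonneg (by linarith)]; ring

lemma mul_abs_sub_abs_mul_le {b l : ℝ} (hl : 0 ≤ l) (h : l ≤ |b|) (t : ℝ) :
    l * |t| - |b * t| ≤ (b - l * Real.sign b) * t := by
  have := neg_abs_le ((b - l * Real.sign b) * t)
  rw [abs_mul, abs_sub_mul_sign hl h] at this
  rw [abs_mul]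
  linarith

lemma exists_abs_eq_mul_eq_neg_abs (b t : ℝ) : ∃ s, |s| = |t| ∧ b * s = -|b * t| := by
  by_cases h : 0 ≤ b * t
  · exact ⟨-t, abs_neg t, by rw [abs_of_nonneg h]; ring⟩
  · exact ⟨t, rfl, by rw [abs_of_neg (not_le.mp h)]; ring⟩

variable {ι : Type*} (b : ι → ℝ) (lam1 lam2 c : ℝ)

noncomputable def reducedObjective (T : Finset ι) (y : ι → ℝ) : ℝ :=
  (1/2) * ∑ i ∈ T, (y i)^2 + ∑ i ∈ T, (b i - lam2 * Real.sign (b i)) * y i + c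
    + lam1 * Real.sqrt (∑ i ∈ T, (y i)^2)

lemma reducedObjective_eq_sum (T : Finset ι) (y : ι → ℝ) :
    reducedObjective b lam1 lam2 c T y
      = ∑ i ∈ T, ((1/2) * (y i)^2 + (b i - lam2 * Real.sign (b i)) * y i) + c
        + lam1 * Real.sqrt (∑ i ∈ T, (y i)^2) := by
  simp only [reducedObjective, sum_add_distrib, mul_sum]

variable [Fintype ι]

noncomputable def objective (x : ι → ℝ) : ℝ :=
  (1/2) * ∑ i, (x i)^2 + ∑ i, b i * x i + c
    + lam1 * Real.sqrt (∑ i, (x i)^2) + lam2 * ∑ i, |x i|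

lemma objective_eq_sum (x : ι → ℝ) :
    objective b lam1 lam2 c x
      = ∑ i, ((1/2) * (x i)^2 + b i * x i + lam2 * |x i|) + c
        + lam1 * Real.sqrt (∑ i, (x i)^2) := by
  simp only [objective, sum_add_distrib, mul_sum]
  ring

variable {b lam1 lam2 c}

lemma reducedObjective_le_objective (hlam1 : 0 ≤ lam1) (hlam2 : 0 ≤ lam2) {T : Finset ι}
    (hT : ∀ i ∉ T, |b i| ≤ lam2) (x : ι → ℝ) :
    reducedObjective b lam1 lam2 c T x ≤ objective b lam1 lam2 c x := by
  have hsep : ∑ i ∈ T, ((1/2) * (x i)^2 + (b i - lam2 * Real.sign (b i)) * x i)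
      ≤ ∑ i, ((1/2) * (x i)^2 + b i * x i + lam2 * |x i|) := by
    calc _ ≤ ∑ i ∈ T, ((1/2) * (x i)^2 + b i * x i + lam2 * |x i|) :=
          sum_le_sum fun i _ => by linarith [sub_mul_sign_mul_le hlam2 (b i) (x i)]
      _ ≤ _ := sum_le_sum_of_subset_of_nonneg (subset_univ T) fun i _ hi => by
          nlinarith [mul_add_mul_abs_nonneg (hT i hi) (x i), sq_nonneg (x i)]
  have hnorm : ∑ i ∈ T, (x i)^2 ≤ ∑ i, (x i)^2 :=
    sum_le_sum_of_subset_of_nonneg (subset_univ T) fun i _ _ => sq_nonneg (x i)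
  rw [objective_eq_sum, reducedObjective_eq_sum]
  gcongr

lemma exists_objective_le_reducedObjective [DecidableEq ι] (hlam2 : 0 ≤ lam2) {T : Finset ι}
    (hT : ∀ i ∈ T, lam2 ≤ |b i|) (y : ι → ℝ) :
    ∃ z, objective b lam1 lam2 c z ≤ reducedObjective b lam1 lam2 c T y := by
  choose s hs_abs hs_mul using fun i => exists_abs_eq_mul_eq_neg_abs (b i) (y i)
  have hs_sq : ∀ i, (s i)^2 = (y i)^2 := fun i => by rw [← sq_abs, hs_abs, sq_abs]
  set z : ι → ℝ := fun i => if i ∈ T then s i else 0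
  have sum_z : ∀ h : ι → ℝ → ℝ, (∀ i, h i 0 = 0) → ∑ i, h i (z i) = ∑ i ∈ T, h i (s i) := by
    intro h h0
    rw [← sum_subset (subset_univ T) fun i _ hi => by simp [z, hi, h0]]
    exact sum_congr rfl fun i hi => by simp [z, hi]
  refine ⟨z, ?_⟩
  rw [objective_eq_sum, reducedObjective_eq_sum,
    sum_z (fun i t => (1/2) * t^2 + b i * t + lam2 * |t|) (by simp),
    sum_z (fun _ t => t^2) (by simp)]
  simp only [hs_sq]
  gcongr ?_ + _ + _
  refine sum_le_sum fun i hi => ?_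
  rw [hs_mul, hs_abs]
  linarith [mul_abs_sub_abs_mul_le hlam2 (hT i hi) (y i)]

end SparseGroupLasso

theorem stmt_1 (n : ℕ) (b : Fin n → ℝ) (lam1 lam2 c : ℝ)
    (hlam1 : 0 ≤ lam1) (hlam2 : 0 ≤ lam2)
    (f : (Fin n → ℝ) → ℝ)
    (hf : ∀ x, f x = (1/2) * ∑ i, (x i)^2 + ∑ i, b i * x i + c
      + lam1 * Real.sqrt (∑ i, (x i)^2) + lam2 * ∑ i, |x i|)
    (S : Finset (Fin n)) (hS : S = Finset.univ.filter (fun i => |b i| < lam2))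
    (g : (Fin n → ℝ) → ℝ)
    (hg : ∀ y, g y = (1/2) * ∑ i ∈ Sᶜ, (y i)^2
      + ∑ i ∈ Sᶜ, (b i - lam2 * Real.sign (b i)) * y i + c
      + lam1 * Real.sqrt (∑ i ∈ Sᶜ, (y i)^2))
    (x0 : Fin n → ℝ) (hmin : ∀ x, f x0 ≤ f x) :
    ∀ y : Fin n → ℝ, g x0 ≤ g y := by
  intro y
  have hf : f = SparseGroupLasso.objective b lam1 lam2 c := funext hf
  have hg : g = SparseGroupLasso.reducedObjective b lam1 lam2 c Sᶜ := funext hg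
  have hS_small : ∀ i ∉ Sᶜ, |b i| ≤ lam2 := fun i hi =>
    (by simpa [hS] using hi : |b i| < lam2).le
  have hSc_large : ∀ i ∈ Sᶜ, lam2 ≤ |b i| := fun i hi => by simpa [hS] using hi
  obtain ⟨z, hz⟩ := SparseGroupLasso.exists_objective_le_reducedObjective hlam2 hSc_large y
  calc g x0 ≤ f x0 :=
        hf ▸ hg ▸ SparseGroupLasso.reducedObjective_le_objective hlam1 hlam2 hS_small x0
    _ ≤ f z := hmin z
    _ ≤ g y := hf ▸ hg ▸ hz
end

section
/- Let f(x) = ½xᵀx + bᵀx + λ₁‖x‖₂ with λ₁ ≥ 0 and b ∈ ℝⁿ. Then x = 0 minimizes f if and only if ‖b‖₂ ≤ λ₁; and if ‖b‖₂ > λ₁, the unique minimizer is x⁰ = −(1 − λ₁/‖b‖₂)·b. -/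
/-!
Write `r = ‖b‖`. By Cauchy–Schwarz, `⟪b, x⟫ ≥ -r ‖x‖`, so if `r ≤ λ₁` then
`f x ≥ ½‖x‖² ≥ f 0`. If `λ₁ < r`, put `c = 1 - λ₁ / r ∈ (0, 1]` and `x⁰ = -c b`;
expanding the squares, `f x - f x⁰ - ½‖x - x⁰‖² = (λ₁ / r) (⟪b, x⟫ + r ‖x‖) ≥ 0`,
so `x⁰` is a strict minimizer with quadratic growth, and `0 ≠ x⁰` is not a minimizer.
-/

section InnerProductSpace

variable {E : Type*} [NormedAddCommGroup E] [InnerProductSpace ℝ E]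

noncomputable def groupLassoObjective (lam : ℝ) (b x : E) : ℝ :=
  1 / 2 * ‖x‖ ^ 2 + inner ℝ b x + lam * ‖x‖

@[simp]
lemma groupLassoObjective_zero (lam : ℝ) (b : E) : groupLassoObjective lam b 0 = 0 := by
  simp [groupLassoObjective]

lemma neg_norm_mul_norm_le_real_inner (b x : E) : -(‖b‖ * ‖x‖) ≤ inner ℝ b x :=
  neg_le_of_abs_le (abs_real_inner_le_norm b x)

lemma half_sq_norm_le_groupLassoObjective {lam : ℝ} {b : E} (hb : ‖b‖ ≤ lam) (x : E) :
    1 / 2 * ‖x‖ ^ 2 ≤ groupLassoObjective lam b x := by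
  have hCS := neg_norm_mul_norm_le_real_inner b x
  have hgap : 0 ≤ (lam - ‖b‖) * ‖x‖ := mul_nonneg (sub_nonneg.2 hb) (norm_nonneg x)
  unfold groupLassoObjective
  linarith

lemma groupLassoObjective_shrink_add_half_sq_le {lam : ℝ} {b : E} (hlam : 0 ≤ lam)
    (hb : lam < ‖b‖) (x : E) :
    groupLassoObjective lam b (-(1 - lam / ‖b‖) • b) + 1 / 2 * ‖x - -(1 - lam / ‖b‖) • b‖ ^ 2
      ≤ groupLassoObjective lam b x := by
  set r := ‖b‖
  set c := 1 - lam / r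
  have hr : 0 < r := hlam.trans_lt hb
  have hratio : 1 - c = lam / r := by ring
  have hlam_eq : lam = (1 - c) * r := by rw [hratio, div_mul_cancel₀ _ hr.ne']
  have hc : 0 ≤ c := sub_nonneg.2 ((div_le_one hr).2 hb.le)
  have hnorm : ‖-c • b‖ = c * r := by
    rw [norm_smul, Real.norm_eq_abs, abs_neg, abs_of_nonneg hc]
  have hinner : inner ℝ b (-c • b) = -c * r ^ 2 := by
    rw [real_inner_smul_right, real_inner_self_eq_norm_sq]
  have hdist : ‖x - -c • b‖ ^ 2 = ‖x‖ ^ 2 + 2 * c * inner ℝ b x + c ^ 2 * r ^ 2 := by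
    rw [neg_smul, sub_neg_eq_add, norm_add_sq_real, real_inner_smul_right, real_inner_comm,
      norm_smul, Real.norm_eq_abs, abs_of_nonneg hc]
    ring
  have hgap : 0 ≤ (1 - c) * (inner ℝ b x + r * ‖x‖) := by
    refine mul_nonneg (hratio ▸ div_nonneg hlam hr.le) ?_
    linarith [neg_norm_mul_norm_le_real_inner b x]
  unfold groupLassoObjective
  rw [hnorm, hinner, hdist]
  linear_combination hgap + (c * r - ‖x‖) * hlam_eq

lemma groupLassoObjective_shrink_lt_zero {lam : ℝ} {b : E} (hlam : 0 ≤ lam) (hb : lam < ‖b‖) :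
    groupLassoObjective lam b (-(1 - lam / ‖b‖) • b) < 0 := by
  have hr : 0 < ‖b‖ := hlam.trans_lt hb
  have hs : -(1 - lam / ‖b‖) • b ≠ 0 := smul_ne_zero
    (neg_ne_zero.2 (sub_pos.2 ((div_lt_one hr).2 hb)).ne') (norm_pos_iff.1 hr)
  have hgrowth := groupLassoObjective_shrink_add_half_sq_le hlam hb 0
  rw [zero_sub, norm_neg, groupLassoObjective_zero] at hgrowth
  linarith [pow_pos (norm_pos_iff.2 hs) 2]

lemma eq_shrink_of_groupLassoObjective_le {lam : ℝ} {b x : E} (hlam : 0 ≤ lam) (hb : lam < ‖b‖)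
    (hx : groupLassoObjective lam b x ≤ groupLassoObjective lam b (-(1 - lam / ‖b‖) • b)) :
    x = -(1 - lam / ‖b‖) • b := by
  have hgrowth := groupLassoObjective_shrink_add_half_sq_le hlam hb x
  have hdist : ‖x - -(1 - lam / ‖b‖) • b‖ ^ 2 ≤ 0 := by linarith
  exact sub_eq_zero.1 (norm_eq_zero.1 (pow_eq_zero_iff two_ne_zero |>.1
    (le_antisymm hdist (by positivity))))

end InnerProductSpace

lemma sqrt_sum_sq_eq_norm_toLp {ι : Type*} [Fintype ι] (x : ι → ℝ) :
    √(∑ i, x i ^ 2) = ‖(WithLp.toLp 2 x : EuclideanSpace ℝ ι)‖ := by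
  simp [EuclideanSpace.norm_eq]

lemma sum_mul_eq_inner_toLp {ι : Type*} [Fintype ι] (b x : ι → ℝ) :
    ∑ i, b i * x i
      = inner ℝ (WithLp.toLp 2 b : EuclideanSpace ℝ ι) (WithLp.toLp 2 x) := by
  simp [PiLp.inner_apply, mul_comm]

theorem stmt_14 (n : ℕ) (b : Fin n → ℝ) (lam1 : ℝ) (hlam1 : 0 ≤ lam1)
    (f : (Fin n → ℝ) → ℝ)
    (hf : ∀ x, f x = (1/2) * ∑ i, (x i)^2 + ∑ i, b i * x i
      + lam1 * Real.sqrt (∑ i, (x i)^2)) :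
    ((∀ x, f 0 ≤ f x) ↔ Real.sqrt (∑ i, (b i)^2) ≤ lam1) ∧
    (lam1 < Real.sqrt (∑ i, (b i)^2) →
      (∀ x, f (fun i => -(1 - lam1 / Real.sqrt (∑ i, (b i)^2)) * b i) ≤ f x) ∧
      (∀ x, (∀ x', f x ≤ f x') →
        x = fun i => -(1 - lam1 / Real.sqrt (∑ i, (b i)^2)) * b i)) := by
  obtain ⟨B, rfl⟩ : ∃ B : EuclideanSpace ℝ (Fin n), WithLp.ofLp B = b := ⟨_, WithLp.ofLp_toLp 2 b⟩
  have hF : ∀ x, f x = groupLassoObjective lam1 B (WithLp.toLp 2 x) := fun x => by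
    rw [hf, groupLassoObjective, sum_mul_eq_inner_toLp, ← sqrt_sum_sq_eq_norm_toLp,
      Real.sq_sqrt (by positivity), WithLp.toLp_ofLp]
  have hs : (fun i => -(1 - lam1 / ‖B‖) * B i) = WithLp.ofLp (-(1 - lam1 / ‖B‖) • B) := rfl
  simp only [sqrt_sum_sq_eq_norm_toLp, WithLp.toLp_ofLp, hs, hF, WithLp.toLp_zero,
    groupLassoObjective_zero]
  set s : EuclideanSpace ℝ (Fin n) := -(1 - lam1 / ‖B‖) • B
  refine ⟨⟨fun hmin => ?_, fun hb x => ?_⟩, fun hb => ⟨fun x => ?_, fun x hx => ?_⟩⟩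
  · by_contra! hb
    linarith [hmin (WithLp.ofLp s), groupLassoObjective_shrink_lt_zero hlam1 hb]
  · exact (by positivity : (0 : ℝ) ≤ 1 / 2 * ‖WithLp.toLp 2 x‖ ^ 2).trans
      (half_sq_norm_le_groupLassoObjective hb _)
  · linarith [groupLassoObjective_shrink_add_half_sq_le hlam1 hb (WithLp.toLp 2 x),
      (by positivity : (0 : ℝ) ≤ 1 / 2 * ‖WithLp.toLp 2 x - s‖ ^ 2)]
  · have hxs := eq_shrink_of_groupLassoObjective_le hlam1 hb
      (by simpa only [WithLp.toLp_ofLp] using hx (WithLp.ofLp s))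
    exact congrArg WithLp.ofLp hxs
end

section
/- Let x⁰ minimize f(x) = ½xᵀx + (b − λ₂ s)ᵀx + λ₁‖x‖₂ over ℝⁿ, where s = sgn(b) componentwise and |bᵢ| ≥ λ₂ for all i. Then for every i, either x⁰ᵢ = 0 or sgn(x⁰ᵢ) = −sgn(bᵢ). -/
open Finset

theorem stmt_16 (n : ℕ) (b : Fin n → ℝ) (lam1 lam2 : ℝ)
    (hlam1 : 0 ≤ lam1) (hlam2 : 0 ≤ lam2)
    (hb : ∀ i, lam2 ≤ |b i|)
    (f : (Fin n → ℝ) → ℝ)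
    (hf : ∀ x, f x = (1/2) * ∑ i, (x i)^2
      + ∑ i, (b i - lam2 * Real.sign (b i)) * x i
      + lam1 * Real.sqrt (∑ i, (x i)^2))
    (x0 : Fin n → ℝ) (hmin : ∀ x, f x0 ≤ f x) :
    ∀ i, x0 i = 0 ∨ Real.sign (x0 i) = -Real.sign (b i) := by
  intro i
  by_cases ha : x0 i = 0
  · exact Or.inl ha
  right
  set y := Function.update x0 i 0 with hy
  have h1 : ∑ j, (y j)^2 = ∑ j, (x0 j)^2 - (x0 i)^2 := by
    have e : ∀ j : Fin n, (y j)^2 = (x0 j)^2 - (if j = i then (x0 i)^2 else 0) := by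
      intro j
      by_cases h : j = i
      · subst h; simp [hy]
      · simp [hy, Function.update_of_ne h, h]
    rw [Finset.sum_congr rfl fun j _ => e j, Finset.sum_sub_distrib]
    simp
  have h2 : ∑ j, (b j - lam2 * Real.sign (b j)) * y j
      = ∑ j, (b j - lam2 * Real.sign (b j)) * x0 j
        - (b i - lam2 * Real.sign (b i)) * x0 i := by
    have e : ∀ j : Fin n, (b j - lam2 * Real.sign (b j)) * y j
        = (b j - lam2 * Real.sign (b j)) * x0 j
          - (if j = i then (b i - lam2 * Real.sign (b i)) * x0 i else 0) := by
      intro j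
      by_cases h : j = i
      · subst h; simp [hy]
      · simp [hy, Function.update_of_ne h, h]
    rw [Finset.sum_congr rfl fun j _ => e j, Finset.sum_sub_distrib]
    simp
  have hmy := hmin y
  rw [hf x0, hf y, h1, h2] at hmy
  have hs : Real.sqrt (∑ j, (x0 j)^2 - (x0 i)^2) ≤ Real.sqrt (∑ j, (x0 j)^2) := by
    apply Real.sqrt_le_sqrt
    nlinarith [sq_nonneg (x0 i)]
  have hl1 : lam1 * Real.sqrt (∑ j, (x0 j)^2 - (x0 i)^2)
      ≤ lam1 * Real.sqrt (∑ j, (x0 j)^2) := mul_le_mul_of_nonneg_left hs hlam1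
  have ha2 : 0 < (x0 i)^2 := by positivity
  have hkey : (b i - lam2 * Real.sign (b i)) * x0 i < 0 := by nlinarith
  rcases lt_trichotomy (b i) 0 with hbi | hbi | hbi
  · rw [Real.sign_of_neg hbi] at hkey ⊢
    have hci : b i + lam2 ≤ 0 := by
      have := hb i; rw [abs_of_neg hbi] at this; linarith
    have hx : 0 < x0 i := by
      by_contra h
      push_neg at h
      nlinarith
    rw [Real.sign_of_pos hx]; ring
  · rw [hbi, Real.sign_zero] at hkey
    simp [hbi] at hkey
  · rw [Real.sign_of_pos hbi] at hkey ⊢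
    have hci : 0 ≤ b i - lam2 := by
      have := hb i; rw [abs_of_pos hbi] at this; linarith
    have hx : x0 i < 0 := by
      by_contra h
      push_neg at h
      nlinarith
    rw [Real.sign_of_neg hx]
end
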